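/- arXiv:math/0109001 — 8 statements merged into one kernel-verified Lean document; each statement's English description precedes it below -/
import Mathlib

section
/- Let c : ℤ → ℤ → ℂ satisfy: (i) c(k,k) ≠ 0 for every integer k ≠ 0; (ii) c(k,m) = 0 whenever m > k; (iii) c(0,m) = 0 for every integer m. Let S be the set of functions a : ℤ → ℂ whose support is bounded below and which satisfy, for every k ∈ ℤ, ∑_{m∈ℤ} a(m)·c(k,m) = 0. Then S is a ℂ-linear subspace of the space of functions ℤ → ℂ of dimension exactly 1, and moreover every nonzero a ∈ S satisfies a(m) = 0 for all m < 0 and a(0) ≠ 0. -/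
/-!
The system `∑ₘ a(m) c(k,m) = 0` is lower triangular. Row `k ≠ 0` has a nonzero diagonal
entry, so, for a solution vanishing below `k`, it forces `a k = 0`; starting from the
lower bound of the support, this shows that every solution vanishes in negative degrees and,
if `a 0 = 0`, everywhere. Hence evaluation at `0` is injective on solutions. It is also
surjective: since row `0` vanishes identically, `a 0 = 1` extends by forward substitution
to a solution. So the solution space is a line.
-/

open Finset

namespace TriangularSystem

section CommSemiring

variable {R : Type*} [CommSemiring R] {c : ℤ → ℤ → R}

theorem support_mul_subset_Icc (hc : ∀ k m, k < m → c k m = 0) {a : ℤ → R} {N : ℤ}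
    (ha : ∀ m < N, a m = 0) (k : ℤ) : (fun m => a m * c k m).support ⊆ Set.Icc N k := by
  intro m hm
  by_contra hout
  rcases not_and_or.mp hout with hlt | hgt
  · exact hm (by simp [ha m (not_le.mp hlt)])
  · exact hm (by simp [hc k m (not_le.mp hgt)])

theorem finsum_mul_eq_sum_Icc (hc : ∀ k m, k < m → c k m = 0) {a : ℤ → R} {N : ℤ}
    (ha : ∀ m < N, a m = 0) (k : ℤ) :
    ∑ᶠ m, a m * c k m = ∑ m ∈ Icc N k, a m * c k m :=
  finsum_eq_sum_of_support_subset _ (by simpa using support_mul_subset_Icc hc ha k)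

theorem hasFiniteSupport_mul (hc : ∀ k m, k < m → c k m = 0) {a : ℤ → R} {N : ℤ}
    (ha : ∀ m < N, a m = 0) (k : ℤ) : Function.HasFiniteSupport fun m => a m * c k m :=
  (Set.finite_Icc N k).subset (support_mul_subset_Icc hc ha k)

def solutions (hc : ∀ k m, k < m → c k m = 0) : Submodule R (ℤ → R) where
  carrier := {a | (∃ N, ∀ m < N, a m = 0) ∧ ∀ k, ∑ᶠ m, a m * c k m = 0}
  zero_mem' := ⟨⟨0, fun _ _ => rfl⟩, fun k => by simp⟩
  add_mem' := by
    rintro a b ⟨⟨Na, ha⟩, hsa⟩ ⟨⟨Nb, hb⟩, hsb⟩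
    refine ⟨⟨min Na Nb, fun m hm => ?_⟩, fun k => ?_⟩
    · simp [ha m (lt_min_iff.mp hm).1, hb m (lt_min_iff.mp hm).2]
    · simp only [Pi.add_apply, add_mul]
      rw [finsum_add_distrib (hasFiniteSupport_mul hc ha k) (hasFiniteSupport_mul hc hb k),
        hsa k, hsb k, add_zero]
  smul_mem' := by
    rintro r a ⟨⟨N, ha⟩, hsa⟩
    refine ⟨⟨N, fun m hm => by simp [ha m hm]⟩, fun k => ?_⟩
    simp only [Pi.smul_apply, smul_eq_mul, mul_assoc]
    rw [← mul_finsum' _ r (hasFiniteSupport_mul hc ha k), hsa k, mul_zero]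

end CommSemiring

section NoZeroDivisors

variable {R : Type*} [CommSemiring R] [NoZeroDivisors R] {c : ℤ → ℤ → R}
  {hc : ∀ k m, k < m → c k m = 0} {a : ℤ → R}

theorem apply_eq_zero_of_forall_lt (ha : a ∈ solutions hc) {k : ℤ} (hk : c k k ≠ 0)
    (hlt : ∀ m < k, a m = 0) : a k = 0 := by
  have hrow := ha.2 k
  rw [finsum_mul_eq_sum_Icc hc hlt, Icc_self, sum_singleton] at hrow
  exact (mul_eq_zero.mp hrow).resolve_right hk

theorem apply_eq_zero_of_neg (hdiag : ∀ k, k ≠ 0 → c k k ≠ 0) (ha : a ∈ solutions hc)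
    {m : ℤ} (hm : m < 0) : a m = 0 := by
  obtain ⟨N, hN⟩ := ha.1
  induction m using Int.strongRec (m := N) with
  | lt m hmN => exact hN m hmN
  | ge k _ ih =>
    exact apply_eq_zero_of_forall_lt ha (hdiag k hm.ne) fun m hmk => ih m hmk (hmk.trans hm)

theorem eq_zero_of_apply_zero (hdiag : ∀ k, k ≠ 0 → c k k ≠ 0) (ha : a ∈ solutions hc)
    (h0 : a 0 = 0) : a = 0 := by
  funext m
  induction m using Int.strongRec (m := 0) with
  | lt m hm => exact apply_eq_zero_of_neg hdiag ha hm
  | ge k _ ih =>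
    rcases eq_or_ne k 0 with rfl | hk
    · exact h0
    · exact apply_eq_zero_of_forall_lt ha (hdiag k hk) ih

end NoZeroDivisors

section Field

variable {K : Type*} [Field K]

noncomputable def canonicalSolution (c : ℤ → ℤ → K) (k : ℤ) : K :=
  if k < 0 then 0
  else if k = 0 then 1
  else -(∑ m ∈ (Ico 0 k).attach, canonicalSolution c m * c k m) / c k k
termination_by k.toNat
decreasing_by have := mem_Ico.mp m.2; omega

variable {c : ℤ → ℤ → K}

theorem canonicalSolution_of_neg {k : ℤ} (hk : k < 0) : canonicalSolution c k = 0 := by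
  rw [canonicalSolution, if_pos hk]

theorem canonicalSolution_zero : canonicalSolution c 0 = 1 := by
  rw [canonicalSolution]; simp

theorem canonicalSolution_of_pos {k : ℤ} (hk : 0 < k) :
    canonicalSolution c k = -(∑ m ∈ Ico 0 k, canonicalSolution c m * c k m) / c k k := by
  rw [canonicalSolution, if_neg hk.not_gt, if_neg hk.ne',
    sum_attach (Ico 0 k) fun m => canonicalSolution c m * c k m]

theorem sum_Icc_canonicalSolution_mul {k : ℤ} (hk : 0 < k) (hck : c k k ≠ 0) :
    ∑ m ∈ Icc 0 k, canonicalSolution c m * c k m = 0 := by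
  rw [← Ico_insert_right hk.le, sum_insert right_notMem_Ico, canonicalSolution_of_pos hk,
    div_mul_cancel₀ _ hck, neg_add_cancel]

theorem canonicalSolution_mem_solutions (hc : ∀ k m, k < m → c k m = 0)
    (hdiag : ∀ k, k ≠ 0 → c k k ≠ 0) (hrow0 : ∀ m, c 0 m = 0) :
    canonicalSolution c ∈ solutions hc := by
  have hneg : ∀ m < 0, canonicalSolution c m = 0 := fun m hm => canonicalSolution_of_neg hm
  refine ⟨⟨0, hneg⟩, fun k => ?_⟩
  rw [finsum_mul_eq_sum_Icc hc hneg]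
  rcases lt_trichotomy k 0 with hk | rfl | hk
  · rw [Icc_eq_empty_of_lt hk, sum_empty]
  · simp [hrow0]
  · exact sum_Icc_canonicalSolution_mul hk (hdiag k hk.ne')

theorem rank_solutions (hc : ∀ k m, k < m → c k m = 0) (hdiag : ∀ k, k ≠ 0 → c k k ≠ 0)
    (hrow0 : ∀ m, c 0 m = 0) : Module.rank K (solutions hc) = 1 := by
  let eval₀ : solutions hc →ₗ[K] K := (LinearMap.proj 0).comp (solutions hc).subtype
  have hinj : Function.Injective eval₀ :=
    (injective_iff_map_eq_zero _).mpr fun a ha0 =>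
      Subtype.ext (eq_zero_of_apply_zero hdiag a.2 ha0)
  have hsurj : Function.Surjective eval₀ := fun r =>
    ⟨r • ⟨_, canonicalSolution_mem_solutions hc hdiag hrow0⟩, by
      simp [eval₀, canonicalSolution_zero]⟩
  rw [(LinearEquiv.ofBijective eval₀ ⟨hinj, hsurj⟩).rank_eq, Module.rank_self]

end Field

end TriangularSystem

open TriangularSystem in
/-- Lemma 4.7 / Theorem 4.1 of the paper: the triangular linear system
`∑ₘ a(m)·c(k,m) = 0` (for all `k`) on functions `a : ℤ → ℂ` with support
bounded below has a solution space which is a ℂ-subspace of dimension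
exactly `1`, and every nonzero solution vanishes in negative degrees and
has `a 0 ≠ 0`. -/
theorem casimir_uniqueness
    (c : ℤ → ℤ → ℂ)
    (h1 : ∀ k : ℤ, k ≠ 0 → c k k ≠ 0)
    (h2 : ∀ k m : ℤ, k < m → c k m = 0)
    (h3 : ∀ m : ℤ, c 0 m = 0) :
    ∃ W : Submodule ℂ (ℤ → ℂ),
      (W : Set (ℤ → ℂ)) =
        {a : ℤ → ℂ | (∃ N : ℤ, ∀ m : ℤ, m < N → a m = 0) ∧
          ∀ k : ℤ, ∑ᶠ m : ℤ, a m * c k m = 0} ∧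
      Module.rank ℂ W = 1 ∧
      ∀ a : ℤ → ℂ, a ∈ W → a ≠ 0 → (∀ m : ℤ, m < 0 → a m = 0) ∧ a 0 ≠ 0 :=
  ⟨solutions h2, rfl, rank_solutions h2 h1 h3, fun _ ha hne =>
    ⟨fun _ hm => apply_eq_zero_of_neg h1 ha hm, fun h0 => hne (eq_zero_of_apply_zero h1 ha h0)⟩⟩
end

section
/- In the Laurent-coefficient setup (with a ≠ 0, τ(j) = 0 for j < −1, and τ(−1) ≠ n·a for every integer n ≠ 1), the set Sol of solutions E is a ℂ-linear subspace of the space of functions ℤ → ℂ of dimension exactly 1. -/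
noncomputable def Fcas (a : ℂ) (τ : ℤ → ℂ) : ℕ → ℂ
  | 0 => 1
  | (k+1) => (∑ j ∈ Finset.range (k+1), τ j * Fcas a τ (k - j)) / (a * ((k:ℂ)+2) - τ (-1))
  decreasing_by exact Nat.lt_succ_of_le (Nat.sub_le k j)

noncomputable def E0cas (a : ℂ) (τ : ℤ → ℂ) : ℤ → ℂ :=
  fun m => if 1 ≤ m then Fcas a τ (m - 1).toNat else 0

lemma E0cas_vanish (a : ℂ) (τ : ℤ → ℂ) : ∀ m : ℤ, m < 1 → E0cas a τ m = 0 := by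
  intro m hm
  simp only [E0cas]
  rw [if_neg (by omega)]

lemma E0cas_one (a : ℂ) (τ : ℤ → ℂ) : E0cas a τ 1 = 1 := by
  simp [E0cas, Fcas]

lemma sum_eq_cas {τ E : ℤ → ℂ} (hτ : ∀ j : ℤ, j < -1 → τ j = 0) {N : ℤ}
    (hE : ∀ m : ℤ, m < N → E m = 0) (m : ℤ) :
    ∑ᶠ j : ℤ, τ j * E (m + 1 - j) = ∑ j ∈ Finset.Icc (-1) (m + 1 - N), τ j * E (m + 1 - j) := by
  apply finsum_eq_sum_of_support_subset
  intro j hj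
  simp only [Function.mem_support] at hj
  simp only [Finset.coe_Icc, Set.mem_Icc]
  constructor
  · by_contra h; push_neg at h; exact hj (by rw [hτ j (by omega), zero_mul])
  · by_contra h; push_neg at h; exact hj (by rw [hE _ (by omega), mul_zero])

lemma zero_cas (a : ℂ) (τ : ℤ → ℂ) (hτ : ∀ j : ℤ, j < -1 → τ j = 0)
    (hgen : ∀ n : ℤ, n ≠ 1 → τ (-1) ≠ (n : ℂ) * a) (E : ℤ → ℂ)
    (hbd : ∃ N : ℤ, ∀ m : ℤ, m < N → E m = 0)
    (heq : ∀ m : ℤ, a * ((m : ℂ) + 2) * ((m : ℂ) + 1) * E (m + 2) =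
        ((m : ℂ) + 1) * ∑ᶠ j : ℤ, τ j * E (m + 1 - j))
    (h1 : E 1 = 0) : E = 0 := by
  by_contra h
  have hne : ∃ z : ℤ, E z ≠ 0 := by
    by_contra h'
    push_neg at h'
    exact h (funext h')
  obtain ⟨N, hN⟩ := hbd
  obtain ⟨M, hM, hMle⟩ := Int.exists_least_of_bdd (P := fun z => E z ≠ 0)
    ⟨N, fun z hz => by by_contra h'; exact hz (hN z (by omega))⟩ hne
  have hbelow : ∀ m : ℤ, m < M → E m = 0 := by
    intro m hm
    by_contra h'
    exact absurd (hMle m h') (by omega)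
  have key := heq (M - 2)
  rw [sum_eq_cas hτ hbelow (M - 2)] at key
  have hIcc : M - 2 + 1 - M = (-1 : ℤ) := by ring
  rw [hIcc, Finset.Icc_self, Finset.sum_singleton] at key
  have h2 : (M - 2 : ℤ) + 2 = M := by ring
  have h3 : (M - 2 : ℤ) + 1 - -1 = M := by ring
  rw [h2, h3] at key
  push_cast at key
  have hM1 : M ≠ 1 := fun h' => hM (h' ▸ h1)
  have hc1 : (M : ℂ) - 1 ≠ 0 := by
    intro h'
    have : (M : ℂ) = 1 := by linear_combination h'
    exact hM1 (by exact_mod_cast this)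
  have hc2 : a * (M : ℂ) - τ (-1) ≠ 0 := by
    intro h'
    exact hgen M hM1 (by linear_combination -h')
  have : ((M : ℂ) - 1) * (a * (M : ℂ) - τ (-1)) * E M = 0 := by linear_combination key
  rcases mul_eq_zero.mp this with h' | h'
  · rcases mul_eq_zero.mp h' with h'' | h''
    · exact hc1 h''
    · exact hc2 h''
  · exact hM h'

lemma E0cas_sol (a : ℂ) (τ : ℤ → ℂ) (hτ : ∀ j : ℤ, j < -1 → τ j = 0)
    (hgen : ∀ n : ℤ, n ≠ 1 → τ (-1) ≠ (n : ℂ) * a) (m : ℤ) :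
    a * ((m : ℂ) + 2) * ((m : ℂ) + 1) * E0cas a τ (m + 2) =
      ((m : ℂ) + 1) * ∑ᶠ j : ℤ, τ j * E0cas a τ (m + 1 - j) := by
  rw [sum_eq_cas hτ (E0cas_vanish a τ) m]
  have hm11 : m + 1 - 1 = m := by ring
  rw [hm11]
  rcases lt_trichotomy m (-1) with hm | hm | hm
  · rw [Finset.Icc_eq_empty (by omega), Finset.sum_empty,
      E0cas_vanish a τ (m+2) (by omega)]
    ring
  · subst hm; norm_num
  · obtain ⟨k, rfl⟩ := Int.eq_ofNat_of_zero_le (by omega : (0:ℤ) ≤ m)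
    have hsplit : Finset.Icc (-1 : ℤ) (k : ℤ) = insert (-1) (Finset.Icc 0 (k:ℤ)) := by
      ext x; simp only [Finset.mem_Icc, Finset.mem_insert]; omega
    rw [hsplit, Finset.sum_insert (by simp)]
    have hE02 : E0cas a τ ((k:ℤ) + 2) = Fcas a τ (k+1) := by
      have h1 : (1:ℤ) ≤ (k:ℤ) + 2 := by omega
      have h2 : ((k:ℤ) + 2 - 1).toNat = k + 1 := by omega
      simp [E0cas, h1, h2]
    have hconv : ∑ j ∈ Finset.Icc (0:ℤ) (k:ℤ), τ j * E0cas a τ ((k:ℤ) + 1 - j) =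
        ∑ i ∈ Finset.range (k+1), τ (i:ℤ) * Fcas a τ (k - i) := by
      rw [show Finset.Icc (0:ℤ) (k:ℤ) =
          Finset.map ⟨Nat.cast, Nat.cast_injective⟩ (Finset.range (k+1)) from ?_,
        Finset.sum_map]
      · apply Finset.sum_congr rfl
        intro i hi
        simp only [Finset.mem_range] at hi
        have h1 : (1:ℤ) ≤ (k:ℤ) + 1 - (i:ℤ) := by omega
        have h2 : ((k:ℤ) + 1 - (i:ℤ) - 1).toNat = k - i := by omega
        simp [E0cas, Function.Embedding.coeFn_mk, h1, h2]
      · ext x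
        simp only [Finset.mem_Icc, Finset.mem_map, Finset.mem_range,
          Function.Embedding.coeFn_mk]
        constructor
        · rintro ⟨hx0, hxk⟩; exact ⟨x.toNat, by omega, by omega⟩
        · rintro ⟨i, hi, rfl⟩; omega
    rw [hE02]
    have hsum1 : E0cas a τ ((k:ℤ) + 1 - -1) = Fcas a τ (k+1) := by
      rw [show (k:ℤ) + 1 - -1 = (k:ℤ) + 2 by ring, hE02]
    rw [hsum1, hconv]
    have hd : a * ((k:ℂ) + 2) - τ (-1) ≠ 0 := by
      intro h'
      exact hgen ((k:ℤ)+2) (by omega) (by push_cast; linear_combination -h')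
    have hF : (a * ((k:ℂ) + 2) - τ (-1)) * Fcas a τ (k+1) =
        ∑ i ∈ Finset.range (k+1), τ (i:ℤ) * Fcas a τ (k - i) := by
      rw [Fcas]
      field_simp
    push_cast
    linear_combination ((k:ℂ) + 1) * hF

/-- Lemma 5.4 of the paper: in the Laurent-coefficient setup (with `a ≠ 0`,
`τ j = 0` for `j < -1`, and `τ (-1) ≠ n·a` for every integer `n ≠ 1`), the set
of solutions `E : ℤ → ℂ` (support bounded below) of the coefficient form of the
equation `a·E″ − (E·T)′ = 0` is a ℂ-subspace of dimension exactly `1`. -/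
theorem casimir_equation_solution_space
    (a : ℂ) (ha : a ≠ 0)
    (τ : ℤ → ℂ) (hτ : ∀ j : ℤ, j < -1 → τ j = 0)
    (hgen : ∀ n : ℤ, n ≠ 1 → τ (-1) ≠ (n : ℂ) * a) :
    ∃ W : Submodule ℂ (ℤ → ℂ),
      (W : Set (ℤ → ℂ)) =
        {E : ℤ → ℂ | (∃ N : ℤ, ∀ m : ℤ, m < N → E m = 0) ∧
          ∀ m : ℤ,
            a * ((m : ℂ) + 2) * ((m : ℂ) + 1) * E (m + 2) =
              ((m : ℂ) + 1) * ∑ᶠ j : ℤ, τ j * E (m + 1 - j)} ∧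
      Module.rank ℂ W = 1 := by
  refine ⟨ℂ ∙ E0cas a τ, ?_, ?_⟩
  · ext E
    simp only [SetLike.mem_coe, Submodule.mem_span_singleton, Set.mem_setOf_eq]
    constructor
    · rintro ⟨c, rfl⟩
      constructor
      · exact ⟨1, fun m hm => by
          simp [E0cas_vanish a τ m hm]⟩
      · intro m
        have hv : ∀ n : ℤ, n < 1 → (c • E0cas a τ) n = 0 := fun n hn => by
          simp [E0cas_vanish a τ n hn]
        rw [sum_eq_cas hτ hv m]
        have h0 := E0cas_sol a τ hτ hgen m
        rw [sum_eq_cas hτ (E0cas_vanish a τ) m] at h0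
        have hs : ∑ j ∈ Finset.Icc (-1) (m + 1 - 1), τ j * (c • E0cas a τ) (m + 1 - j) =
            c * ∑ j ∈ Finset.Icc (-1) (m + 1 - 1), τ j * E0cas a τ (m + 1 - j) := by
          rw [Finset.mul_sum]
          apply Finset.sum_congr rfl
          intro j _
          simp only [Pi.smul_apply, smul_eq_mul]
          ring
        rw [hs]
        simp only [Pi.smul_apply, smul_eq_mul]
        linear_combination c * h0
    · rintro ⟨⟨N, hN⟩, heq⟩
      refine ⟨E 1, ?_⟩
      have key : E - E 1 • E0cas a τ = 0 := by
        apply zero_cas a τ hτ hgen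
        · refine ⟨min N 1, fun m hm => ?_⟩
          simp [hN m (by omega), E0cas_vanish a τ m (by omega)]
        · intro m
          have hvD : ∀ n : ℤ, n < min N 1 → (E - E 1 • E0cas a τ) n = 0 := fun n hn => by
            simp [hN n (by omega), E0cas_vanish a τ n (by omega)]
          have hvE : ∀ n : ℤ, n < min N 1 → E n = 0 := fun n hn => hN n (by omega)
          have hvE0 : ∀ n : ℤ, n < min N 1 → E0cas a τ n = 0 := fun n hn =>
            E0cas_vanish a τ n (by omega)
          rw [sum_eq_cas hτ hvD m]
          have h1 := heq m
          rw [sum_eq_cas hτ hvE m] at h1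
          have h0 := E0cas_sol a τ hτ hgen m
          rw [sum_eq_cas hτ hvE0 m] at h0
          have hs : ∑ j ∈ Finset.Icc (-1) (m + 1 - min N 1),
              τ j * (E - E 1 • E0cas a τ) (m + 1 - j) =
              (∑ j ∈ Finset.Icc (-1) (m + 1 - min N 1), τ j * E (m + 1 - j)) -
              E 1 * ∑ j ∈ Finset.Icc (-1) (m + 1 - min N 1), τ j * E0cas a τ (m + 1 - j) := by
            rw [Finset.mul_sum, ← Finset.sum_sub_distrib]
            apply Finset.sum_congr rfl
            intro j _
            simp only [Pi.sub_apply, Pi.smul_apply, smul_eq_mul]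
            ring
          rw [hs]
          simp only [Pi.sub_apply, Pi.smul_apply, smul_eq_mul]
          linear_combination h1 - E 1 * h0
        · simp [E0cas_one]
      have := sub_eq_zero.mp key
      exact this.symm
  · rw [rank_submodule_eq_one_iff]
    refine ⟨E0cas a τ, Submodule.mem_span_singleton_self _, ?_, le_rfl⟩
    intro h
    have := congrFun h 1
    rw [E0cas_one] at this
    simp at this
end

section
/- In the Laurent-coefficient setup (with a ≠ 0, τ(j) = 0 for j < −1, and τ(−1) ≠ n·a for every integer n ≠ 1), every nonzero solution E ∈ Sol satisfies E(n) = 0 for all n ≤ 0 and E(1) ≠ 0. In particular there is, up to a nonzero scalar factor, exactly one solution, and it corresponds to a vector field behaving as z·(1 + O(z))·∂/∂z at the marked point P₊. -/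
private noncomputable def gseq (a : ℂ) (τ : ℤ → ℂ) : ℕ → ℂ
  | 0 => 1
  | (k+1) =>
      (a * ((k : ℂ) + 2) - τ (-1))⁻¹ *
        ∑ j ∈ Finset.range (k + 1), τ j * gseq a τ (k - j)
  decreasing_by omega

private noncomputable def Ezero (a : ℂ) (τ : ℤ → ℂ) : ℤ → ℂ :=
  fun n => if 1 ≤ n then gseq a τ (n - 1).toNat else 0

private lemma Ezero_one (a : ℂ) (τ : ℤ → ℂ) : Ezero a τ 1 = 1 := by
  simp [Ezero, gseq]

private lemma Ezero_nonpos (a : ℂ) (τ : ℤ → ℂ) (n : ℤ) (hn : n ≤ 0) :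
    Ezero a τ n = 0 := by
  simp only [Ezero, if_neg (by omega : ¬ (1 : ℤ) ≤ n)]

private lemma Ezero_rec (a : ℂ) (τ : ℤ → ℂ) (k : ℕ) :
    Ezero a τ ((k : ℤ) + 2) =
      (a * ((k : ℂ) + 2) - τ (-1))⁻¹ *
        ∑ j ∈ Finset.range (k + 1), τ j * Ezero a τ ((k : ℤ) + 1 - j) := by
  have h1 : ((k : ℤ) + 2 - 1).toNat = k + 1 := by omega
  simp only [Ezero, if_pos (by omega : (1 : ℤ) ≤ (k : ℤ) + 2), h1]
  rw [gseq]
  congr 1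
  apply Finset.sum_congr rfl
  intro j hj
  simp only [Finset.mem_range] at hj
  have hj' : (j : ℤ) ≤ k := by omega
  rw [if_pos (by omega : (1 : ℤ) ≤ (k : ℤ) + 1 - j),
    show ((k : ℤ) + 1 - j - 1).toNat = k - j by omega]

private lemma Icc_sum (f : ℤ → ℂ) (k : ℕ) :
    ∑ j ∈ Finset.Icc (0 : ℤ) (k : ℤ), f j = ∑ i ∈ Finset.range (k + 1), f i := by
  induction k with
  | zero => simp
  | succ k ih =>
    rw [Finset.sum_range_succ, ← ih,
      show ((k + 1 : ℕ) : ℤ) = (k : ℤ) + 1 by push_cast; ring,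
      show Finset.Icc (0 : ℤ) ((k : ℤ) + 1) = insert ((k : ℤ) + 1) (Finset.Icc 0 (k : ℤ))
        from by ext x; simp; omega,
      Finset.sum_insert (by simp)]
    ring

private lemma sum_eq (τ : ℤ → ℂ) (hτ : ∀ j : ℤ, j < -1 → τ j = 0)
    (E : ℤ → ℂ) (N : ℤ) (hN : ∀ m : ℤ, m < N → E m = 0) (m : ℤ) :
    ∑ᶠ j : ℤ, τ j * E (m + 1 - j)
      = ∑ j ∈ Finset.Icc (-1) (m + 1 - N), τ j * E (m + 1 - j) := by
  apply finsum_eq_finset_sum_of_support_subset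
  intro j hj
  simp only [Function.mem_support] at hj
  simp only [Finset.coe_Icc, Set.mem_Icc]
  constructor
  · by_contra h; exact hj (by rw [hτ j (by omega), zero_mul])
  · by_contra h; exact hj (by rw [hN _ (by omega), mul_zero])

private lemma Ezero_sol (a : ℂ) (τ : ℤ → ℂ)
    (hτ : ∀ j : ℤ, j < -1 → τ j = 0)
    (hgen : ∀ n : ℤ, n ≠ 1 → τ (-1) ≠ (n : ℂ) * a) :
    ∀ m : ℤ, a * ((m : ℂ) + 2) * ((m : ℂ) + 1) * Ezero a τ (m + 2) =
        ((m : ℂ) + 1) * ∑ᶠ j : ℤ, τ j * Ezero a τ (m + 1 - j) := by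
  intro m
  rw [sum_eq τ hτ (Ezero a τ) 1 (fun n hn => Ezero_nonpos a τ n (by omega)) m,
    show m + 1 - 1 = m by ring]
  rcases lt_or_ge m (-1) with hm | hm
  · rw [Finset.Icc_eq_empty (by omega), Finset.sum_empty,
      Ezero_nonpos a τ (m + 2) (by omega)]
    ring
  rcases eq_or_lt_of_le hm with rfl | hm'
  · norm_num
  · obtain ⟨k, rfl⟩ : ∃ k : ℕ, m = (k : ℤ) := ⟨m.toNat, by omega⟩
    rw [show Finset.Icc (-1 : ℤ) (k : ℤ) = insert (-1 : ℤ) (Finset.Icc 0 (k : ℤ))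
        from by ext x; simp; omega,
      Finset.sum_insert (by simp), Icc_sum (fun j => τ j * Ezero a τ ((k : ℤ) + 1 - j)) k,
      show (k : ℤ) + 1 - (-1) = (k : ℤ) + 2 by ring]
    have hc : a * ((k : ℂ) + 2) - τ (-1) ≠ 0 := by
      refine sub_ne_zero.mpr fun h => hgen ((k : ℤ) + 2) (by omega) ?_
      rw [← h]; push_cast; ring
    have hcc : (a * ((k : ℂ) + 2) - τ (-1))⁻¹ * (a * ((k : ℂ) + 2) - τ (-1)) = 1 :=
      inv_mul_cancel₀ hc
    rw [Ezero_rec a τ k]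
    set S := ∑ j ∈ Finset.range (k + 1), τ j * Ezero a τ ((k : ℤ) + 1 - j) with hS
    linear_combination ((k : ℂ) + 1) * S * hcc

private lemma zero_below (a : ℂ) (τ : ℤ → ℂ)
    (hτ : ∀ j : ℤ, j < -1 → τ j = 0)
    (hgen : ∀ n : ℤ, n ≠ 1 → τ (-1) ≠ (n : ℂ) * a)
    (E : ℤ → ℂ)
    (heq : ∀ m : ℤ, a * ((m : ℂ) + 2) * ((m : ℂ) + 1) * E (m + 2) =
        ((m : ℂ) + 1) * ∑ᶠ j : ℤ, τ j * E (m + 1 - j))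
    (n : ℤ) (hn : n ≠ 1) (hk : ∀ k : ℤ, k < n → E k = 0) : E n = 0 := by
  have h := heq (n - 2)
  have hs : ∑ᶠ j : ℤ, τ j * E (n - 2 + 1 - j) = τ (-1) * E n := by
    rw [finsum_eq_single _ (-1 : ℤ)]
    · rw [show n - 2 + 1 - (-1 : ℤ) = n by ring]
    · intro j hj
      rcases lt_or_gt_of_ne hj with h' | h'
      · rw [hτ j h', zero_mul]
      · rw [hk (n - 2 + 1 - j) (by omega), mul_zero]
  rw [hs, show n - 2 + 2 = n by ring] at h
  push_cast at h
  have hfac : ((n : ℂ) - 1) * ((a * n - τ (-1)) * E n) = 0 := by linear_combination h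
  have h1 : (n : ℂ) - 1 ≠ 0 := sub_ne_zero.mpr (by exact_mod_cast hn)
  have h2 : a * n - τ (-1) ≠ 0 :=
    sub_ne_zero.mpr fun h => hgen n hn (by rw [← h]; ring)
  rcases mul_eq_zero.mp hfac with h' | h'
  · exact absurd h' h1
  · rcases mul_eq_zero.mp h' with h'' | h''
    · exact absurd h'' h2
    · exact h''

private lemma main1 (a : ℂ) (τ : ℤ → ℂ)
    (hτ : ∀ j : ℤ, j < -1 → τ j = 0)
    (hgen : ∀ n : ℤ, n ≠ 1 → τ (-1) ≠ (n : ℂ) * a)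
    (E : ℤ → ℂ) (N : ℤ) (hN : ∀ m : ℤ, m < N → E m = 0)
    (heq : ∀ m : ℤ, a * ((m : ℂ) + 2) * ((m : ℂ) + 1) * E (m + 2) =
        ((m : ℂ) + 1) * ∑ᶠ j : ℤ, τ j * E (m + 1 - j))
    (hE : E ≠ 0) :
    (∀ n : ℤ, n ≤ 0 → E n = 0) ∧ E 1 ≠ 0 := by
  have low : ∀ n : ℤ, n ≤ 0 → E n = 0 := by
    have key : ∀ d : ℕ, ∀ n : ℤ, n ≤ 0 → n - N ≤ d → E n = 0 := by
      intro d
      induction d with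
      | zero =>
        intro n hn hd
        exact zero_below a τ hτ hgen E heq n (by omega) fun k hk => hN k (by omega)
      | succ d ih =>
        intro n hn hd
        exact zero_below a τ hτ hgen E heq n (by omega) fun k hk =>
          ih k (by omega) (by omega)
    intro n hn
    exact key (n - N).toNat n hn (Int.self_le_toNat _)
  refine ⟨low, fun h1 => hE ?_⟩
  have up : ∀ d : ℕ, ∀ n : ℤ, n ≤ 1 + d → E n = 0 := by
    intro d
    induction d with
    | zero =>
      intro n hn
      rcases eq_or_lt_of_le hn with rfl | hn'
      · exact h1
      · exact low n (by omega)
    | succ d ih =>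
      intro n hn
      rcases lt_or_ge n (1 + (d : ℤ) + 1) with hn' | hn'
      · exact ih n (by omega)
      · exact zero_below a τ hτ hgen E heq n (by omega) fun k hk => ih k (by omega)
  funext n
  have := Int.self_le_toNat n
  exact up n.toNat n (by omega)

/-- Theorem 5.2 of the paper: in the Laurent-coefficient setup, every nonzero
solution `E` of the coefficient form of `a·E″ − (E·T)′ = 0` (with support
bounded below) satisfies `E n = 0` for all `n ≤ 0` and `E 1 ≠ 0`; in
particular there is, up to a nonzero scalar factor, exactly one solution, and
its vector field behaves as `z·(1 + O(z))·∂/∂z` at `P₊`. -/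
theorem casimir_vector_field_simple_zero
    (a : ℂ) (ha : a ≠ 0)
    (τ : ℤ → ℂ) (hτ : ∀ j : ℤ, j < -1 → τ j = 0)
    (hgen : ∀ n : ℤ, n ≠ 1 → τ (-1) ≠ (n : ℂ) * a) :
    (∀ E : ℤ → ℂ,
      E ∈ {E : ℤ → ℂ | (∃ N : ℤ, ∀ m : ℤ, m < N → E m = 0) ∧
          ∀ m : ℤ,
            a * ((m : ℂ) + 2) * ((m : ℂ) + 1) * E (m + 2) =
              ((m : ℂ) + 1) * ∑ᶠ j : ℤ, τ j * E (m + 1 - j)} →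
      E ≠ 0 → (∀ n : ℤ, n ≤ 0 → E n = 0) ∧ E 1 ≠ 0) ∧
    ∃ E₀ : ℤ → ℂ,
      E₀ ∈ {E : ℤ → ℂ | (∃ N : ℤ, ∀ m : ℤ, m < N → E m = 0) ∧
          ∀ m : ℤ,
            a * ((m : ℂ) + 2) * ((m : ℂ) + 1) * E (m + 2) =
              ((m : ℂ) + 1) * ∑ᶠ j : ℤ, τ j * E (m + 1 - j)} ∧
      E₀ ≠ 0 ∧
      ∀ E : ℤ → ℂ,
        E ∈ {E : ℤ → ℂ | (∃ N : ℤ, ∀ m : ℤ, m < N → E m = 0) ∧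
            ∀ m : ℤ,
              a * ((m : ℂ) + 2) * ((m : ℂ) + 1) * E (m + 2) =
                ((m : ℂ) + 1) * ∑ᶠ j : ℤ, τ j * E (m + 1 - j)} →
        ∃ s : ℂ, E = s • E₀ := by
  constructor
  · rintro E ⟨⟨N, hN⟩, heq⟩ hE
    exact main1 a τ hτ hgen E N hN heq hE
  · have hE₀ne : Ezero a τ ≠ 0 := by
      intro h
      have := congrFun h 1
      rw [Ezero_one] at this
      simp at this
    refine ⟨Ezero a τ, ⟨⟨1, fun n hn => Ezero_nonpos a τ n (by omega)⟩,
      Ezero_sol a τ hτ hgen⟩, hE₀ne, ?_⟩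
    rintro E ⟨⟨N, hN⟩, heq⟩
    refine ⟨E 1, ?_⟩
    set c := E 1 with hc
    set N' := min N 1 with hN'
    have hN'E : ∀ m : ℤ, m < N' → E m = 0 := fun m hm => hN m (by omega)
    have hN'0 : ∀ m : ℤ, m < N' → Ezero a τ m = 0 :=
      fun m hm => Ezero_nonpos a τ m (by omega)
    set F : ℤ → ℂ := fun n => E n - c * Ezero a τ n with hF
    have hNF : ∀ m : ℤ, m < N' → F m = 0 := by
      intro m hm
      simp only [hF, hN'E m hm, hN'0 m hm, mul_zero, sub_zero]
    have heqF : ∀ m : ℤ, a * ((m : ℂ) + 2) * ((m : ℂ) + 1) * F (m + 2) =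
        ((m : ℂ) + 1) * ∑ᶠ j : ℤ, τ j * F (m + 1 - j) := by
      intro m
      have h1 := heq m
      rw [sum_eq τ hτ E N' hN'E m] at h1
      have h2 := Ezero_sol a τ hτ hgen m
      rw [sum_eq τ hτ (Ezero a τ) N' hN'0 m] at h2
      rw [sum_eq τ hτ F N' hNF m]
      have hsplit : ∑ j ∈ Finset.Icc (-1) (m + 1 - N'), τ j * F (m + 1 - j)
          = (∑ j ∈ Finset.Icc (-1) (m + 1 - N'), τ j * E (m + 1 - j))
            - c * ∑ j ∈ Finset.Icc (-1) (m + 1 - N'), τ j * Ezero a τ (m + 1 - j) := by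
        rw [Finset.mul_sum, ← Finset.sum_sub_distrib]
        apply Finset.sum_congr rfl
        intro j _
        simp only [hF]
        ring
      rw [hsplit]
      simp only [hF]
      linear_combination h1 - c * h2
    have hF0 : F = 0 := by
      by_contra hFne
      have := (main1 a τ hτ hgen F N' hNF heqF hFne).2
      apply this
      simp only [hF, Ezero_one, mul_one, hc, sub_self]
    funext n
    have := congrFun hF0 n
    simp only [hF, Pi.zero_apply, sub_eq_zero] at this
    simpa [Pi.smul_apply, smul_eq_mul] using this
end

section
/- In the current-algebra setup, let γ be a normalized 2-cocycle on D. Then γ(e, j ⁅x,y⁆ a) = 0 for all x, y ∈ g and all a ∈ 𝒜. -/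
/-- The identity established inside the proof of Lemma 4.1 of the paper:
for a normalized 2-cocycle `γ` on `D`, `γ(e, j ⁅x,y⁆ a) = 0` for all
`x y : g` and `a : 𝒜`. -/
theorem cocycle_vanishes_on_commutator_currents
    (D : Type*) [LieRing D] [LieAlgebra ℂ D]
    (A : Type*) [CommRing A] [Algebra ℂ A]
    (g : Type*) [LieRing g] [LieAlgebra ℂ g]
    (j : g →ₗ[ℂ] A →ₗ[ℂ] D)
    (hj : ∀ (x y : g) (a b : A), ⁅j x a, j y b⁆ = j ⁅x, y⁆ (a * b))
    (e : D) (δ : A →ₗ[ℂ] A) (hδ : δ 1 = 0)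
    (he : ∀ (x : g) (a : A), ⁅e, j x a⁆ = j x (δ a))
    (γ : D →ₗ[ℂ] D →ₗ[ℂ] ℂ)
    (hγ_alt : ∀ u : D, γ u u = 0)
    (hγ_coc : ∀ u v w : D, γ ⁅u, v⁆ w + γ ⁅v, w⁆ u + γ ⁅w, u⁆ v = 0)
    (hγ_norm : ∀ (x y : g) (b : A), γ (j x 1) (j y b) = 0) :
    ∀ (x y : g) (a : A), γ e (j ⁅x, y⁆ a) = 0 := by
  intro x y a
  have skew : ∀ u v : D, γ u v = -γ v u := by
    intro u v
    have h := hγ_alt (u + v)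
    simp only [map_add, LinearMap.add_apply, hγ_alt] at h
    linear_combination h
  have h := hγ_coc (j x 1) (j y a) e
  rw [hj] at h
  have h1 : ⁅j y a, e⁆ = -j y (δ a) := by
    rw [← lie_skew, he]
  have h2 : ⁅e, j x 1⁆ = 0 := by
    rw [he, hδ, map_zero]
  rw [h1, h2] at h
  simp only [map_neg, map_zero, LinearMap.neg_apply, LinearMap.zero_apply] at h
  have h3 : γ (j y (δ a)) (j x 1) = 0 := by
    rw [skew, hγ_norm, neg_zero]
  rw [h3] at h
  rw [skew]
  simp only [one_mul] at h
  linear_combination -h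
end

section
/- In the current-algebra setup, let γ be a normalized 2-cocycle on D and assume that g is perfect, i.e. g coincides with its derived algebra ⁅g,g⁆. Then γ(e, j x a) = 0 for all x ∈ g and all a ∈ 𝒜. -/
/-- Statement (4.3) of Lemma 4.1 of the paper: for a perfect `g` and a
normalized 2-cocycle `γ` on `D`, `γ(e, j x a) = 0` for all `x : g`, `a : 𝒜`. -/
theorem cocycle_vanishes_on_currents
    (D : Type*) [LieRing D] [LieAlgebra ℂ D]
    (A : Type*) [CommRing A] [Algebra ℂ A]
    (g : Type*) [LieRing g] [LieAlgebra ℂ g]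
    (hperf : ⁅(⊤ : LieIdeal ℂ g), (⊤ : LieIdeal ℂ g)⁆ = (⊤ : LieIdeal ℂ g))
    (j : g →ₗ[ℂ] A →ₗ[ℂ] D)
    (hj : ∀ (x y : g) (a b : A), ⁅j x a, j y b⁆ = j ⁅x, y⁆ (a * b))
    (e : D) (δ : A →ₗ[ℂ] A) (hδ : δ 1 = 0)
    (he : ∀ (x : g) (a : A), ⁅e, j x a⁆ = j x (δ a))
    (γ : D →ₗ[ℂ] D →ₗ[ℂ] ℂ)
    (hγ_alt : ∀ u : D, γ u u = 0)
    (hγ_coc : ∀ u v w : D, γ ⁅u, v⁆ w + γ ⁅v, w⁆ u + γ ⁅w, u⁆ v = 0)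
    (hγ_norm : ∀ (x y : g) (b : A), γ (j x 1) (j y b) = 0) :
    ∀ (x : g) (a : A), γ e (j x a) = 0 := by
  -- skew-symmetry
  have hskew : ∀ u v : D, γ u v = -γ v u := by
    intro u v
    have h := hγ_alt (u + v)
    simp only [map_add, LinearMap.add_apply, hγ_alt] at h
    linear_combination h
  intro x a
  -- key: vanishes on brackets
  have key : ∀ (y z : g) (a : A), γ e (j ⁅y, z⁆ a) = 0 := by
    intro y z a
    have hc := hγ_coc e (j y 1) (j z a)
    rw [he y 1, hδ, map_zero, map_zero, LinearMap.zero_apply,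
      hj y z 1 a, one_mul] at hc
    have h3 : γ ⁅j z a, e⁆ (j y 1) = 0 := by
      have : ⁅j z a, e⁆ = -(j z (δ a)) := by rw [← lie_skew, he]
      rw [this, map_neg, LinearMap.neg_apply, hskew, hγ_norm]
      ring
    rw [h3, add_zero, zero_add, hskew] at hc
    linear_combination -hc
  -- now use perfection
  have hx : x ∈ ⁅(⊤ : LieIdeal ℂ g), (⊤ : LieIdeal ℂ g)⁆ := by rw [hperf]; exact LieSubmodule.mem_top x
  rw [← LieSubmodule.mem_toSubmodule, LieSubmodule.lieIdeal_oper_eq_linear_span'] at hx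
  induction hx using Submodule.span_induction with
  | mem m hm =>
      obtain ⟨y, -, z, -, rfl⟩ := hm
      exact key y z a
  | zero => simp
  | add m n _ _ hm hn => simp [map_add, hm, hn]
  | smul c m _ hm => simp [map_smul, hm]
end

section
/- In the current-algebra setup, assume g is perfect (g = ⁅g,g⁆). Let V be a ℂ-vector space, γ a ℂ-bilinear map D × D → ℂ with γ(u,u) = 0 which is normalized (γ(j x 1, j y b) = 0 for all x,y ∈ g, b ∈ 𝒜), and let ρ : D →ₗ[ℂ] End_ℂ(V) be a projective representation with cocycle γ, i.e. ⁅ρ u, ρ v⁆ = ρ ⁅u,v⁆ + γ(u,v)·id_V for all u,v ∈ D. Then ⁅ρ e, ρ (j x a)⁆ = ρ (j x (δ a)) for all x ∈ g and a ∈ 𝒜. -/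
/-!
The map `x ↦ ⁅ρ e, ρ (j x a)⁆ - ρ (j x (δ a))` is linear in `x`, so since `g` is perfect it
suffices to check that it vanishes on brackets `⁅y, z⁆`. Normalization gives
`ρ (j ⁅y, z⁆ a) = ⁅ρ (j y 1), ρ (j z a)⁆`, and differentiating this by `ad (ρ e)` the first
Leibniz term only involves `⁅ρ e, ρ (j y 1)⁆ = ρ (j y (δ 1)) + scalar`, which is central since
`δ 1 = 0`; the central terms the cocycle produces in the second one drop out under the bracket.
-/

theorem LieAlgebra.linearMap_ext_of_lie_top_eq_top {R L M : Type*} [CommRing R] [LieRing L]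
    [LieAlgebra R L] [AddCommGroup M] [Module R M]
    (hperf : ⁅(⊤ : LieIdeal R L), (⊤ : LieIdeal R L)⁆ = ⊤) {f f' : L →ₗ[R] M}
    (h : ∀ y z : L, f ⁅y, z⁆ = f' ⁅y, z⁆) : f = f' := by
  refine LinearMap.ext_on (s := {m | ∃ y z : L, ⁅y, z⁆ = m}) ?_ ?_
  · have hspan := LieSubmodule.lieIdeal_oper_eq_linear_span' (R := R) (⊤ : LieIdeal R L) ⊤
    simpa [hperf] using hspan.symm
  · rintro - ⟨y, z, rfl⟩
    exact h y z

section AssociativeCommutator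

attribute [local instance] LieRing.ofAssociativeRing

namespace Module.End

variable {R M : Type*} [CommRing R] [AddCommGroup M] [Module R M]

theorem lie_smul_one (X : Module.End R M) (c : R) : ⁅X, c • (1 : Module.End R M)⁆ = 0 := by
  rw [Ring.lie_def, mul_smul_comm, smul_mul_assoc, mul_one, one_mul, sub_self]

theorem smul_one_lie (X : Module.End R M) (c : R) : ⁅c • (1 : Module.End R M), X⁆ = 0 := by
  rw [Ring.lie_def, mul_smul_comm, smul_mul_assoc, mul_one, one_mul, sub_self]

end Module.End

variable {R L M : Type*} [CommRing R] [LieRing L] [LieAlgebra R L] [AddCommGroup M] [Module R M]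

def IsProjectiveRepresentation (γ : L →ₗ[R] L →ₗ[R] R) (ρ : L →ₗ[R] Module.End R M) : Prop :=
  ∀ u v : L, ⁅ρ u, ρ v⁆ = ρ ⁅u, v⁆ + γ u v • (1 : Module.End R M)

namespace IsProjectiveRepresentation

variable {γ : L →ₗ[R] L →ₗ[R] R} {ρ : L →ₗ[R] Module.End R M}

theorem lie_eq_of_cocycle_eq_zero (hρ : IsProjectiveRepresentation γ ρ) {u v : L}
    (h : γ u v = 0) : ⁅ρ u, ρ v⁆ = ρ ⁅u, v⁆ := by
  rw [hρ, h, zero_smul, add_zero]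

theorem lie_lie_right (hρ : IsProjectiveRepresentation γ ρ) (X : Module.End R M) (u v : L) :
    ⁅X, ⁅ρ u, ρ v⁆⁆ = ⁅X, ρ ⁅u, v⁆⁆ := by
  rw [hρ, lie_add, Module.End.lie_smul_one, add_zero]

theorem lie_lie_left (hρ : IsProjectiveRepresentation γ ρ) (X : Module.End R M) (u v : L) :
    ⁅⁅ρ u, ρ v⁆, X⁆ = ⁅ρ ⁅u, v⁆, X⁆ := by
  rw [hρ, add_lie, Module.End.smul_one_lie, add_zero]

end IsProjectiveRepresentation

section CurrentAlgebra

variable {R D A g M : Type*} [CommRing R] [LieRing D] [LieAlgebra R D] [Semiring A] [Module R A]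
  [LieRing g] [LieAlgebra R g] [AddCommGroup M] [Module R M]
  {j : g →ₗ[R] A →ₗ[R] D} {e : D} {δ : A →ₗ[R] A}
  {γ : D →ₗ[R] D →ₗ[R] R} {ρ : D →ₗ[R] Module.End R M}

theorem IsProjectiveRepresentation.map_current_lie (hρ : IsProjectiveRepresentation γ ρ)
    (hj : ∀ (x y : g) (a b : A), ⁅j x a, j y b⁆ = j ⁅x, y⁆ (a * b))
    (hγ_norm : ∀ (x y : g) (b : A), γ (j x 1) (j y b) = 0) (y z : g) (b : A) :
    ρ (j ⁅y, z⁆ b) = ⁅ρ (j y 1), ρ (j z b)⁆ := by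
  rw [hρ.lie_eq_of_cocycle_eq_zero (hγ_norm y z b), hj, one_mul]

theorem IsProjectiveRepresentation.lie_map_current_lie (hρ : IsProjectiveRepresentation γ ρ)
    (hj : ∀ (x y : g) (a b : A), ⁅j x a, j y b⁆ = j ⁅x, y⁆ (a * b))
    (hδ : δ 1 = 0) (he : ∀ (x : g) (a : A), ⁅e, j x a⁆ = j x (δ a))
    (hγ_norm : ∀ (x y : g) (b : A), γ (j x 1) (j y b) = 0) (y z : g) (a : A) :
    ⁅ρ e, ρ (j ⁅y, z⁆ a)⁆ = ρ (j ⁅y, z⁆ (δ a)) := by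
  calc ⁅ρ e, ρ (j ⁅y, z⁆ a)⁆
      = ⁅⁅ρ e, ρ (j y 1)⁆, ρ (j z a)⁆ + ⁅ρ (j y 1), ⁅ρ e, ρ (j z a)⁆⁆ := by
        rw [hρ.map_current_lie hj hγ_norm, leibniz_lie]
    _ = ⁅ρ (j y 1), ρ (j z (δ a))⁆ := by
        rw [hρ.lie_lie_left, hρ.lie_lie_right, he, he, hδ, map_zero, map_zero, zero_lie, zero_add]
    _ = ρ (j ⁅y, z⁆ (δ a)) := (hρ.map_current_lie hj hγ_norm y z (δ a)).symm

theorem IsProjectiveRepresentation.lie_map_current (hρ : IsProjectiveRepresentation γ ρ)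
    (hperf : ⁅(⊤ : LieIdeal R g), (⊤ : LieIdeal R g)⁆ = ⊤)
    (hj : ∀ (x y : g) (a b : A), ⁅j x a, j y b⁆ = j ⁅x, y⁆ (a * b))
    (hδ : δ 1 = 0) (he : ∀ (x : g) (a : A), ⁅e, j x a⁆ = j x (δ a))
    (hγ_norm : ∀ (x y : g) (b : A), γ (j x 1) (j y b) = 0) (x : g) (a : A) :
    ⁅ρ e, ρ (j x a)⁆ = ρ (j x (δ a)) := by
  have hext : LieAlgebra.ad R _ (ρ e) ∘ₗ ρ ∘ₗ j.flip a = ρ ∘ₗ j.flip (δ a) :=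
    LieAlgebra.linearMap_ext_of_lie_top_eq_top hperf fun y z =>
      hρ.lie_map_current_lie hj hδ he hγ_norm y z a
  exact LinearMap.congr_fun hext x

end CurrentAlgebra

end AssociativeCommutator

theorem projective_module_commutator_current_general
    (D : Type*) [LieRing D] [LieAlgebra ℂ D]
    (A : Type*) [CommRing A] [Algebra ℂ A]
    (g : Type*) [LieRing g] [LieAlgebra ℂ g]
    (hperf : ⁅(⊤ : LieIdeal ℂ g), (⊤ : LieIdeal ℂ g)⁆ = (⊤ : LieIdeal ℂ g))
    (j : g →ₗ[ℂ] A →ₗ[ℂ] D)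
    (hj : ∀ (x y : g) (a b : A), ⁅j x a, j y b⁆ = j ⁅x, y⁆ (a * b))
    (e : D) (δ : A →ₗ[ℂ] A) (hδ : δ 1 = 0)
    (he : ∀ (x : g) (a : A), ⁅e, j x a⁆ = j x (δ a))
    (V : Type*) [AddCommGroup V] [Module ℂ V]
    (γ : D →ₗ[ℂ] D →ₗ[ℂ] ℂ)
    (hγ_norm : ∀ (x y : g) (b : A), γ (j x 1) (j y b) = 0)
    (ρ : D →ₗ[ℂ] Module.End ℂ V)
    (hρ : ∀ u v : D, ⁅ρ u, ρ v⁆ = ρ ⁅u, v⁆ + γ u v • (1 : Module.End ℂ V)) :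
    ∀ (x : g) (a : A), ⁅ρ e, ρ (j x a)⁆ = ρ (j x (δ a)) := by
  exact IsProjectiveRepresentation.lie_map_current hρ hperf hj hδ he hγ_norm

/-- Part 1° of Lemma 4.1 of the paper: for a perfect `g` and an admissible
normalized projective `𝒟¹_g`-module `(V, ρ)` with cocycle `γ`,
`[ρ e, ρ (j x a)] = ρ (j x (δ a))`. -/
theorem projective_module_commutator_current
    (D : Type*) [LieRing D] [LieAlgebra ℂ D]
    (A : Type*) [CommRing A] [Algebra ℂ A]
    (g : Type*) [LieRing g] [LieAlgebra ℂ g]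
    (hperf : ⁅(⊤ : LieIdeal ℂ g), (⊤ : LieIdeal ℂ g)⁆ = (⊤ : LieIdeal ℂ g))
    (j : g →ₗ[ℂ] A →ₗ[ℂ] D)
    (hj : ∀ (x y : g) (a b : A), ⁅j x a, j y b⁆ = j ⁅x, y⁆ (a * b))
    (e : D) (δ : A →ₗ[ℂ] A) (hδ : δ 1 = 0)
    (he : ∀ (x : g) (a : A), ⁅e, j x a⁆ = j x (δ a))
    (V : Type*) [AddCommGroup V] [Module ℂ V]
    (γ : D →ₗ[ℂ] D →ₗ[ℂ] ℂ)
    (hγ_alt : ∀ u : D, γ u u = 0)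
    (hγ_norm : ∀ (x y : g) (b : A), γ (j x 1) (j y b) = 0)
    (ρ : D →ₗ[ℂ] Module.End ℂ V)
    (hρ : ∀ u v : D, ⁅ρ u, ρ v⁆ = ρ ⁅u, v⁆ + γ u v • (1 : Module.End ℂ V)) :
    ∀ (x : g) (a : A), ⁅ρ e, ρ (j x a)⁆ = ρ (j x (δ a)) :=
  projective_module_commutator_current_general D A g hperf j hj e δ hδ he V γ hγ_norm ρ hρ
end

section
/- In the current-algebra setup with g = Matrix (Fin l) ℂ, the Lie algebra of l×l complex matrices under the commutator bracket (l ≥ 1), let γ be a normalized 2-cocycle on D. Then for every matrix x and every a ∈ 𝒜, γ(e, j x a) = (trace(x)/l)·γ(e, j 1ₗ a), where 1ₗ is the identity matrix. In particular, γ(e, j x a) depends on x only through its trace. -/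
/-!
The functional `x ↦ γ(e, j x a)` on `𝔤𝔩(l)` kills commutators: the cocycle identity for
`e`, `j u 1`, `j v a` has one term vanishing because `δ 1 = 0` and another by normalization,
leaving `γ(j ⁅u, v⁆ a, e) = 0`. A linear functional on matrices that kills commutators is a
multiple of the trace, since off-diagonal matrix units and differences of diagonal ones are
commutators.
-/

namespace Matrix

variable {n R M : Type*} [Fintype n] [DecidableEq n] [CommRing R] [AddCommGroup M] [Module R M]
  {f : Matrix n n R →ₗ[R] M}

theorem map_single_of_ne_of_map_lie_eq_zero (hf : ∀ u v : Matrix n n R, f ⁅u, v⁆ = 0)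
    {p q : n} (hpq : p ≠ q) (r : R) : f (single p q r) = 0 := by
  have : single p q r = ⁅single p p (1 : R), single p q r⁆ := by
    simp [Ring.lie_def, hpq.symm]
  rw [this, hf]

theorem map_single_self_of_map_lie_eq_zero (hf : ∀ u v : Matrix n n R, f ⁅u, v⁆ = 0)
    (p q : n) (r : R) : f (single p p r) = f (single q q r) := by
  rcases eq_or_ne p q with rfl | hpq
  · rfl
  have : single p p r - single q q r = ⁅single p q r, single q p 1⁆ := by
    simp [Ring.lie_def]
  rw [← sub_eq_zero, ← map_sub, this, hf]

theorem map_eq_trace_smul_of_map_lie_eq_zero (hf : ∀ u v : Matrix n n R, f ⁅u, v⁆ = 0) (i : n)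
    (x : Matrix n n R) : f x = trace x • f (single i i 1) := by
  have hsingle : ∀ p q,
      f (single p q (x p q)) = if p = q then x p p • f (single i i 1) else 0 := by
    intro p q
    split_ifs with hpq
    · subst hpq
      rw [map_single_self_of_map_lie_eq_zero hf p i, ← map_smul, smul_single, smul_eq_mul,
        mul_one]
    · exact map_single_of_ne_of_map_lie_eq_zero hf hpq _
  conv_lhs => rw [matrix_eq_sum_single x]
  simp only [map_sum, hsingle, Finset.sum_ite_eq, Finset.mem_univ, if_true, trace, diag_apply,
    Finset.sum_smul]

theorem map_eq_trace_div_card_smul_map_one_of_map_lie_eq_zero {K V : Type*} [Field K]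
    [CharZero K] [AddCommGroup V] [Module K V] [Nonempty n] {f : Matrix n n K →ₗ[K] V}
    (hf : ∀ u v : Matrix n n K, f ⁅u, v⁆ = 0) (x : Matrix n n K) :
    f x = (trace x / Fintype.card n) • f 1 := by
  obtain ⟨i⟩ := ‹Nonempty n›
  have hcard : (Fintype.card n : K) ≠ 0 := Nat.cast_ne_zero.mpr Fintype.card_ne_zero
  rw [map_eq_trace_smul_of_map_lie_eq_zero hf i x, map_eq_trace_smul_of_map_lie_eq_zero hf i 1,
    trace_one, smul_smul, div_mul_cancel₀ _ hcard]

end Matrix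

section CurrentAlgebra

variable {R g A D M : Type*} [CommRing R] [AddCommMonoid g] [Module R g] [Bracket g g]
  [CommRing A] [Module R A] [LieRing D] [LieAlgebra R D] [AddCommGroup M] [Module R M]

theorem cocycle_apply_current_lie_eq_zero (j : g →ₗ[R] A →ₗ[R] D)
    (hj : ∀ (x y : g) (a b : A), ⁅j x a, j y b⁆ = j ⁅x, y⁆ (a * b))
    (e : D) (δ : A →ₗ[R] A) (hδ : δ 1 = 0) (he : ∀ (x : g) (a : A), ⁅e, j x a⁆ = j x (δ a))
    (γ : D →ₗ[R] D →ₗ[R] M) (hγ_alt : γ.IsAlt)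
    (hγ_coc : ∀ u v w : D, γ ⁅u, v⁆ w + γ ⁅v, w⁆ u + γ ⁅w, u⁆ v = 0)
    (hγ_norm : ∀ (x y : g) (b : A), γ (j x 1) (j y b) = 0) (u v : g) (a : A) :
    γ e (j ⁅u, v⁆ a) = 0 := by
  have hcoc := hγ_coc e (j u 1) (j v a)
  have he_one : ⁅e, j u 1⁆ = 0 := by rw [he, hδ, map_zero]
  have hbracket : ⁅j u 1, j v a⁆ = j ⁅u, v⁆ a := by rw [hj, one_mul]
  have hnorm : γ ⁅j v a, e⁆ (j u 1) = 0 := by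
    rw [← lie_skew, he, map_neg, LinearMap.neg_apply, hγ_alt.neg, hγ_norm]
  rw [he_one, hbracket, hnorm, map_zero, LinearMap.zero_apply, zero_add, add_zero] at hcoc
  rw [← hγ_alt.neg, hcoc, neg_zero]

end CurrentAlgebra

/-- The cocycle identity underlying Lemma 4.3 of the paper: for
`g = 𝔤𝔩(l) = Matrix (Fin l) (Fin l) ℂ` and a normalized 2-cocycle `γ` on `D`,
`γ(e, j x a) = (tr x / l) · γ(e, j 1ₗ a)`. -/
theorem cocycle_on_gl_currents
    (l : ℕ) (hl : 1 ≤ l)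
    (D : Type*) [LieRing D] [LieAlgebra ℂ D]
    (A : Type*) [CommRing A] [Algebra ℂ A]
    (j : Matrix (Fin l) (Fin l) ℂ →ₗ[ℂ] A →ₗ[ℂ] D)
    (hj : ∀ (x y : Matrix (Fin l) (Fin l) ℂ) (a b : A),
      ⁅j x a, j y b⁆ = j ⁅x, y⁆ (a * b))
    (e : D) (δ : A →ₗ[ℂ] A) (hδ : δ 1 = 0)
    (he : ∀ (x : Matrix (Fin l) (Fin l) ℂ) (a : A), ⁅e, j x a⁆ = j x (δ a))
    (γ : D →ₗ[ℂ] D →ₗ[ℂ] ℂ)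
    (hγ_alt : ∀ u : D, γ u u = 0)
    (hγ_coc : ∀ u v w : D, γ ⁅u, v⁆ w + γ ⁅v, w⁆ u + γ ⁅w, u⁆ v = 0)
    (hγ_norm : ∀ (x y : Matrix (Fin l) (Fin l) ℂ) (b : A), γ (j x 1) (j y b) = 0) :
    ∀ (x : Matrix (Fin l) (Fin l) ℂ) (a : A),
      γ e (j x a) = (Matrix.trace x / (l : ℂ)) * γ e (j 1 a) := by
  intro x a
  have : Nonempty (Fin l) := ⟨⟨0, hl⟩⟩
  simpa using Matrix.map_eq_trace_div_card_smul_map_one_of_map_lie_eq_zero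
    (f := (γ e).comp (j.flip a))
    (cocycle_apply_current_lie_eq_zero j hj e δ hδ he γ hγ_alt hγ_coc hγ_norm · · a) x
end

section
/- In the current-algebra setup with g = Matrix (Fin l) ℂ under the commutator bracket (l ≥ 1), let V be a ℂ-vector space, γ a ℂ-bilinear map D × D → ℂ with γ(u,u) = 0 which is normalized, ρ : D →ₗ[ℂ] End_ℂ(V) a projective representation with cocycle γ (⁅ρ u, ρ v⁆ = ρ ⁅u,v⁆ + γ(u,v)·id_V), and let T_e ∈ End_ℂ(V) be an operator satisfying the Sugawara commutation relation ⁅T_e, ρ(j x a)⁆ = ρ(j x (δ a)) for all x ∈ g, a ∈ 𝒜. Set Δ_e = ρ(e) − T_e. Then ⁅Δ_e, ρ(j x a)⁆ = (trace(x)/l)·γ(e, j 1ₗ a)·id_V for all x ∈ g and a ∈ 𝒜. -/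
/-!
Since `ρ e` and `Tₑ` have the same bracket with `ρ (j x a)` up to the cocycle term, the commutator
is `γ(e, j x a) • id`. On a nonzero `V` the projective representation forces the Lie 2-cocycle
identity for `γ`; applied to `e, j y 1, j z a` it shows, using `δ 1 = 0` and normalization, that the
functional `x ↦ γ(e, j x a)` kills `[𝔤𝔩(l), 𝔤𝔩(l)]`. Such a functional is `tr(x)/l` times its value
at `1`, because the off-diagonal matrix units are commutators and the diagonal ones are all
congruent modulo commutators.
-/

namespace Matrix

section

variable {n α : Type*} [Fintype n] [DecidableEq n] [Ring α]

theorem single_sub_single_eq_lie (i k : n) :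
    single i i (1 : α) - single k k 1 = ⁅single i k (1 : α), single k i 1⁆ := by
  rw [Ring.lie_def, single_mul_single_same, single_mul_single_same, one_mul]

theorem single_eq_lie_of_ne {i k : n} (h : i ≠ k) (c : α) :
    single i k c = ⁅single i i (1 : α), single i k c⁆ := by
  rw [Ring.lie_def, single_mul_single_same, single_mul_single_of_ne (h := h.symm), one_mul,
    sub_zero]

end

section

variable {n K M : Type*} [Fintype n] [DecidableEq n] [Field K] [AddCommGroup M] [Module K M]
  {f : Matrix n n K →ₗ[K] M}

theorem map_single_of_ne_of_map_lie_eq_zero_s8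
    (hf : ∀ x y : Matrix n n K, f ⁅x, y⁆ = 0) {i k : n} (h : i ≠ k) (c : K) :
    f (single i k c) = 0 := by
  rw [single_eq_lie_of_ne h, hf]

theorem map_single_one_eq_of_map_lie_eq_zero
    (hf : ∀ x y : Matrix n n K, f ⁅x, y⁆ = 0) (i k : n) :
    f (single i i 1) = f (single k k 1) := by
  rw [← sub_eq_zero, ← map_sub, single_sub_single_eq_lie, hf]

theorem card_smul_map_single_one_of_map_lie_eq_zero
    (hf : ∀ x y : Matrix n n K, f ⁅x, y⁆ = 0) (i : n) :
    (Fintype.card n : K) • f (single i i 1) = f 1 := by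
  rw [← sum_single_one, map_sum, Nat.cast_smul_eq_nsmul, ← Finset.card_univ,
    ← Finset.sum_const]
  exact Finset.sum_congr rfl fun k _ ↦ map_single_one_eq_of_map_lie_eq_zero hf i k

theorem map_eq_trace_div_card_smul_of_map_lie_eq_zero [CharZero K]
    (hf : ∀ x y : Matrix n n K, f ⁅x, y⁆ = 0) (x : Matrix n n K) :
    f x = (trace x / Fintype.card n) • f 1 := by
  induction x using Matrix.induction_on' with
  | h_zero => simp
  | h_add p q hp hq => rw [map_add, hp, hq, trace_add, add_div, add_smul]
  | h_std_basis i k c =>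
    rcases eq_or_ne i k with rfl | h
    · have hcard : (Fintype.card n : K) ≠ 0 :=
        Nat.cast_ne_zero.mpr (Fintype.card_pos_iff.mpr ⟨i⟩).ne'
      rw [trace_single_eq_same, ← card_smul_map_single_one_of_map_lie_eq_zero hf i, smul_smul,
        div_mul_cancel₀ c hcard, ← map_smul, smul_single, smul_eq_mul, mul_one]
    · rw [map_single_of_ne_of_map_lie_eq_zero_s8 hf h, trace_single_eq_of_ne (h := h), zero_div,
        zero_smul]

end

end Matrix

def IsProjectiveRep {K L V : Type*} [CommRing K] [LieRing L] [LieAlgebra K L] [AddCommGroup V]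
    [Module K V] (ρ : L →ₗ[K] Module.End K V) (γ : L →ₗ[K] L →ₗ[K] K) : Prop :=
  ∀ u v, ⁅ρ u, ρ v⁆ = ρ ⁅u, v⁆ + γ u v • (1 : Module.End K V)

namespace IsProjectiveRep

attribute [local instance] LieRing.ofAssociativeRing LieAlgebra.ofAssociativeAlgebra

variable {K L V : Type*} [Field K] [LieRing L] [LieAlgebra K L] [AddCommGroup V] [Module K V]
  {ρ : L →ₗ[K] Module.End K V} {γ : L →ₗ[K] L →ₗ[K] K}

theorem lie_lie (h : IsProjectiveRep ρ γ) (u v w : L) :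
    ⁅ρ u, ⁅ρ v, ρ w⁆⁆ = ρ ⁅u, ⁅v, w⁆⁆ + γ u ⁅v, w⁆ • (1 : Module.End K V) := by
  rw [h v w, lie_add, lie_smul, h, Ring.lie_def (ρ u) 1, mul_one, one_mul, sub_self, smul_zero,
    add_zero]

theorem cocycle [Nontrivial V] (h : IsProjectiveRep ρ γ) (u v w : L) :
    γ u ⁅v, w⁆ + γ v ⁅w, u⁆ + γ w ⁅u, v⁆ = 0 := by
  have hsum : ρ (⁅u, ⁅v, w⁆⁆ + ⁅v, ⁅w, u⁆⁆ + ⁅w, ⁅u, v⁆⁆)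
      + (γ u ⁅v, w⁆ + γ v ⁅w, u⁆ + γ w ⁅u, v⁆) • (1 : Module.End K V) = 0 := by
    rw [← lie_jacobi (ρ u) (ρ v) (ρ w), h.lie_lie, h.lie_lie, h.lie_lie, map_add, map_add,
      add_smul, add_smul]
    abel
  rw [lie_jacobi, map_zero, zero_add] at hsum
  exact (smul_eq_zero.mp hsum).resolve_right one_ne_zero

theorem apply_current_lie_eq_zero {g A : Type*} [AddCommGroup g] [Module K g] [Bracket g g]
    [CommRing A] [Algebra K A] [Nontrivial V] {j : g →ₗ[K] A →ₗ[K] L} {e : L}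
    {δ : A →ₗ[K] A} (hρ : IsProjectiveRep ρ γ)
    (hj : ∀ (x y : g) (a b : A), ⁅j x a, j y b⁆ = j ⁅x, y⁆ (a * b))
    (he : ∀ (x : g) (a : A), ⁅e, j x a⁆ = j x (δ a)) (hδ : δ 1 = 0)
    (hγ_norm : ∀ (x y : g) (b : A), γ (j x 1) (j y b) = 0) (x y : g) (a : A) :
    γ e (j ⁅x, y⁆ a) = 0 := by
  have hcocycle := hρ.cocycle e (j x 1) (j y a)
  rwa [hj, one_mul, ← lie_skew (j y a) e, he, he, hδ, map_zero, map_zero, map_neg, hγ_norm,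
    neg_zero, add_zero, add_zero] at hcocycle

end IsProjectiveRep

theorem semicasimir_commutator_gl_general
    (l : ℕ)
    (D : Type*) [LieRing D] [LieAlgebra ℂ D]
    (A : Type*) [CommRing A] [Algebra ℂ A]
    (j : Matrix (Fin l) (Fin l) ℂ →ₗ[ℂ] A →ₗ[ℂ] D)
    (hj : ∀ (x y : Matrix (Fin l) (Fin l) ℂ) (a b : A),
      ⁅j x a, j y b⁆ = j ⁅x, y⁆ (a * b))
    (e : D) (δ : A →ₗ[ℂ] A) (hδ : δ 1 = 0)
    (he : ∀ (x : Matrix (Fin l) (Fin l) ℂ) (a : A), ⁅e, j x a⁆ = j x (δ a))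
    (V : Type*) [AddCommGroup V] [Module ℂ V]
    (γ : D →ₗ[ℂ] D →ₗ[ℂ] ℂ)
    (hγ_norm : ∀ (x y : Matrix (Fin l) (Fin l) ℂ) (b : A), γ (j x 1) (j y b) = 0)
    (ρ : D →ₗ[ℂ] Module.End ℂ V)
    (hρ : ∀ u v : D, ⁅ρ u, ρ v⁆ = ρ ⁅u, v⁆ + γ u v • (1 : Module.End ℂ V))
    (Te : Module.End ℂ V)
    (hTe : ∀ (x : Matrix (Fin l) (Fin l) ℂ) (a : A),
      ⁅Te, ρ (j x a)⁆ = ρ (j x (δ a))) :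
    ∀ (x : Matrix (Fin l) (Fin l) ℂ) (a : A),
      ⁅ρ e - Te, ρ (j x a)⁆ =
        ((Matrix.trace x / (l : ℂ)) * γ e (j 1 a)) • (1 : Module.End ℂ V) := by
  let : LieRing (Module.End ℂ V) := LieRing.ofAssociativeRing
  intro x a
  rw [sub_lie, hρ, he, hTe, add_sub_cancel_left]
  rcases subsingleton_or_nontrivial V with hV | hV
  · ext v
    exact Subsingleton.elim _ _
  · have htrace := Matrix.map_eq_trace_div_card_smul_of_map_lie_eq_zero
      (f := (γ e).comp (j.flip a))
      (fun y z ↦ IsProjectiveRep.apply_current_lie_eq_zero hρ hj he hδ hγ_norm y z a) x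
    rw [LinearMap.comp_apply, LinearMap.comp_apply, LinearMap.flip_apply, LinearMap.flip_apply,
      Fintype.card_fin, smul_eq_mul] at htrace
    rw [htrace]

/-- Lemma 4.4 of the paper: for `g = 𝔤𝔩(l)`, an admissible normalized
projective module `(V, ρ)` with cocycle `γ`, and a Sugawara operator `Tₑ`
with `[Tₑ, ρ(j x a)] = ρ(j x (δ a))`, the operator `Δₑ = ρ e − Tₑ` satisfies
`[Δₑ, ρ(j x a)] = (tr x / l)·γ(e, j 1ₗ a)·id`. -/
theorem semicasimir_commutator_gl
    (l : ℕ) (hl : 1 ≤ l)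
    (D : Type*) [LieRing D] [LieAlgebra ℂ D]
    (A : Type*) [CommRing A] [Algebra ℂ A]
    (j : Matrix (Fin l) (Fin l) ℂ →ₗ[ℂ] A →ₗ[ℂ] D)
    (hj : ∀ (x y : Matrix (Fin l) (Fin l) ℂ) (a b : A),
      ⁅j x a, j y b⁆ = j ⁅x, y⁆ (a * b))
    (e : D) (δ : A →ₗ[ℂ] A) (hδ : δ 1 = 0)
    (he : ∀ (x : Matrix (Fin l) (Fin l) ℂ) (a : A), ⁅e, j x a⁆ = j x (δ a))
    (V : Type*) [AddCommGroup V] [Module ℂ V]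
    (γ : D →ₗ[ℂ] D →ₗ[ℂ] ℂ)
    (hγ_alt : ∀ u : D, γ u u = 0)
    (hγ_norm : ∀ (x y : Matrix (Fin l) (Fin l) ℂ) (b : A), γ (j x 1) (j y b) = 0)
    (ρ : D →ₗ[ℂ] Module.End ℂ V)
    (hρ : ∀ u v : D, ⁅ρ u, ρ v⁆ = ρ ⁅u, v⁆ + γ u v • (1 : Module.End ℂ V))
    (Te : Module.End ℂ V)
    (hTe : ∀ (x : Matrix (Fin l) (Fin l) ℂ) (a : A),
      ⁅Te, ρ (j x a)⁆ = ρ (j x (δ a))) :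
    ∀ (x : Matrix (Fin l) (Fin l) ℂ) (a : A),
      ⁅ρ e - Te, ρ (j x a)⁆ =
        ((Matrix.trace x / (l : ℂ)) * γ e (j 1 a)) • (1 : Module.End ℂ V) :=
  semicasimir_commutator_gl_general l D A j hj e δ hδ he V γ hγ_norm ρ hρ Te hTe
end
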